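/- arXiv:2307.13572 — 11 statements merged into one kernel-verified Lean document; each statement's English description precedes it below -/
import Mathlib

section
/- Let r1, r2, r3 > 0 and set l1 = r2 + r3, l2 = r1 + r3, l3 = r1 + r2. Assume l1 ≥ l3. Then there exists a unique x ∈ (0, l1) such that sinh(l3) · cosh(l1 − x) = cosh(l2) · sinh(x); moreover this x satisfies x < l3 and l1 − x < l2 (so that the common value sinh(l3)/sinh(x) = cosh(l2)/cosh(l1 − x) is strictly greater than 1). -/
open Real

private lemma key_iff (l1 l2 l3 x : ℝ) :
    Real.sinh l3 * Real.cosh (l1 - x) = Real.cosh l2 * Real.sinh x ↔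
    (Real.cosh l2 + Real.sinh l3 * Real.sinh l1 - Real.sinh l3 * Real.cosh l1) * Real.exp x ^ 2
      = Real.cosh l2 + Real.sinh l3 * Real.sinh l1 + Real.sinh l3 * Real.cosh l1 := by
  have hu : 0 < Real.exp x := Real.exp_pos x
  rw [Real.cosh_sub, Real.sinh_eq x, Real.cosh_eq x, Real.exp_neg]
  constructor <;> intro h
  · field_simp at h
    nlinarith [h, hu]
  · field_simp
    nlinarith [h, hu]

theorem stmt_0 (r1 r2 r3 : ℝ) (hr1 : 0 < r1) (hr2 : 0 < r2) (hr3 : 0 < r3)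
    (l1 l2 l3 : ℝ) (hl1 : l1 = r2 + r3) (hl2 : l2 = r1 + r3) (hl3 : l3 = r1 + r2)
    (hge : l1 ≥ l3) :
    (∃! x : ℝ, x ∈ Set.Ioo 0 l1 ∧
      Real.sinh l3 * Real.cosh (l1 - x) = Real.cosh l2 * Real.sinh x) ∧
    (∀ x : ℝ, x ∈ Set.Ioo 0 l1 →
      Real.sinh l3 * Real.cosh (l1 - x) = Real.cosh l2 * Real.sinh x →
      x < l3 ∧ l1 - x < l2 ∧ 1 < Real.sinh l3 / Real.sinh x) := by
  have hl1pos : 0 < l1 := by rw [hl1]; linarith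
  have hl2pos : 0 < l2 := by rw [hl2]; linarith
  have hl3pos : 0 < l3 := by rw [hl3]; linarith
  have hsum : l1 < l2 + l3 := by rw [hl1, hl2, hl3]; linarith
  set c : ℝ := Real.sinh l3 * Real.cosh l1 with hc_def
  set d : ℝ := Real.cosh l2 + Real.sinh l3 * Real.sinh l1 with hd_def
  have hs3 : 0 < Real.sinh l3 := Real.sinh_pos_iff.2 hl3pos
  have hs1 : 0 < Real.sinh l1 := Real.sinh_pos_iff.2 hl1pos
  have hs31 : Real.sinh l3 ≤ Real.sinh l1 := Real.sinh_le_sinh.2 hge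
  have hc2 : 1 < Real.cosh l2 := Real.one_lt_cosh.2 (ne_of_gt hl2pos)
  have hc : 0 < c := mul_pos hs3 (Real.cosh_pos l1)
  have hid1 : Real.cosh l1 ^ 2 - Real.sinh l1 ^ 2 = 1 := Real.cosh_sq_sub_sinh_sq l1
  have hdc : 0 < d - c := by
    -- d - c = cosh l2 - sinh l3 * (cosh l1 - sinh l1) = cosh l2 - sinh l3 * exp (-l1)
    have h1 : Real.cosh l1 - Real.sinh l1 = Real.exp (-l1) := Real.cosh_sub_sinh l1
    have h2 : Real.exp (-l1) ≤ Real.exp (-l3) := Real.exp_le_exp.2 (by linarith)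
    have h3 : Real.sinh l3 * Real.exp (-l3) < 1 := by
      rw [Real.sinh_eq, Real.exp_neg]
      have he : 1 < Real.exp l3 := Real.one_lt_exp_iff.2 hl3pos
      rw [div_mul_eq_mul_div, div_lt_one (by linarith)]
      have hepos : 0 < Real.exp l3 := Real.exp_pos l3
      have hinv : Real.exp l3 * (Real.exp l3)⁻¹ = 1 := mul_inv_cancel₀ (ne_of_gt hepos)
      nlinarith [hinv, sq_nonneg ((Real.exp l3)⁻¹), inv_pos.2 hepos]
    have h4 : Real.sinh l3 * Real.exp (-l1) < 1 := by
      calc Real.sinh l3 * Real.exp (-l1) ≤ Real.sinh l3 * Real.exp (-l3) := by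
            exact mul_le_mul_of_nonneg_left h2 (le_of_lt hs3)
        _ < 1 := h3
    have : d - c = Real.cosh l2 - Real.sinh l3 * Real.exp (-l1) := by
      rw [hd_def, hc_def, ← h1]; ring
    rw [this]; linarith
  have hdcpos : 0 < d + c := by positivity
  have hratio : 1 < (d + c) / (d - c) := by
    rw [lt_div_iff₀ hdc]; linarith
  set x₀ : ℝ := Real.log ((d + c) / (d - c)) / 2 with hx0_def
  have hexp2x0 : Real.exp x₀ ^ 2 = (d + c) / (d - c) := by
    rw [← Real.exp_nat_mul]
    have : (2 : ℕ) * x₀ = Real.log ((d + c) / (d - c)) := by rw [hx0_def]; push_cast; ring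
    rw [this, Real.exp_log (by positivity)]
  -- the equation for a given x is equivalent to x = x₀
  have hiff : ∀ x : ℝ, (Real.sinh l3 * Real.cosh (l1 - x) = Real.cosh l2 * Real.sinh x) ↔ x = x₀ := by
    intro x
    rw [key_iff]
    constructor
    · intro h
      have h' : Real.exp x ^ 2 = (d + c) / (d - c) := by
        rw [eq_div_iff (ne_of_gt hdc), hd_def, hc_def]
        linear_combination h
      have h2x : Real.exp (2 * x) = (d + c) / (d - c) := by
        rw [two_mul, Real.exp_add, ← sq]; exact h'
      have hlog := congrArg Real.log h2x
      rw [Real.log_exp] at hlog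
      rw [hx0_def, ← hlog]; ring
    · intro h
      subst h
      have hthis : (d - c) * Real.exp x₀ ^ 2 = d + c := by
        rw [hexp2x0, mul_div_cancel₀ _ (ne_of_gt hdc)]
      rw [hd_def, hc_def] at hthis
      linear_combination hthis
  -- x₀ is in the interval
  have hx0pos : 0 < x₀ := by
    rw [hx0_def]
    have : 0 < Real.log ((d + c) / (d - c)) := Real.log_pos hratio
    linarith
  have hx0lt : x₀ < l1 := by
    rw [hx0_def, div_lt_iff₀ (by norm_num : (0:ℝ) < 2)]
    rw [Real.log_lt_iff_lt_exp (by positivity)]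
    rw [div_lt_iff₀ hdc]
    have hexp : Real.exp (l1 * 2) = (Real.cosh l1 + Real.sinh l1) ^ 2 := by
      rw [Real.cosh_add_sinh, ← Real.exp_nat_mul]
      norm_num; ring_nf
    rw [hexp]
    -- reduces to sinh l3 < cosh l2 * sinh l1
    have hkey : Real.sinh l3 < Real.cosh l2 * Real.sinh l1 := by nlinarith
    have ha : 0 < Real.cosh l1 + Real.sinh l1 := by positivity
    have hE : (Real.cosh l1 + Real.sinh l1) ^ 2 * (d - c) - (d + c)
        = 2 * Real.sinh l1 * (Real.cosh l1 + Real.sinh l1) * Real.cosh l2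
          - 2 * (Real.cosh l1 + Real.sinh l1) * Real.sinh l3 := by
      rw [hd_def, hc_def]
      linear_combination (Real.cosh l2 - Real.sinh l3 * (Real.cosh l1 + Real.sinh l1)) * hid1
    have key2 := mul_lt_mul_of_pos_left hkey
      (by positivity : (0:ℝ) < 2 * (Real.cosh l1 + Real.sinh l1))
    linarith [hE, key2]
  -- the second part: properties of any solution
  have hprops : ∀ x : ℝ, x ∈ Set.Ioo 0 l1 →
      Real.sinh l3 * Real.cosh (l1 - x) = Real.cosh l2 * Real.sinh x →
      x < l3 ∧ l1 - x < l2 ∧ 1 < Real.sinh l3 / Real.sinh x := by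
    intro x hx heq
    obtain ⟨hx0, hx1⟩ := hx
    have hsx : 0 < Real.sinh x := Real.sinh_pos_iff.2 hx0
    have hxl3 : x < l3 := by
      by_contra h
      push_neg at h
      have h1 : Real.sinh l3 ≤ Real.sinh x := Real.sinh_le_sinh.2 h
      have h2 : Real.cosh l2 ≤ Real.cosh (l1 - x) := by
        have hm := mul_le_mul_of_nonneg_right h1 (Real.cosh_pos (l1 - x)).le
        have hmm : Real.cosh l2 * Real.sinh x ≤ Real.cosh (l1 - x) * Real.sinh x := by
          rw [← heq]; linarith [hm]
        exact le_of_mul_le_mul_right hmm hsx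
      have h3 : |l2| ≤ |l1 - x| := Real.cosh_le_cosh.1 h2
      rw [abs_of_pos hl2pos, abs_of_pos (by linarith : 0 < l1 - x)] at h3
      linarith
    have hsx3 : Real.sinh x < Real.sinh l3 := Real.sinh_lt_sinh.2 hxl3
    have h2 : Real.cosh (l1 - x) < Real.cosh l2 := by
      have hmm : Real.cosh (l1 - x) * Real.sinh l3 < Real.cosh l2 * Real.sinh l3 := by
        have he' : Real.cosh (l1 - x) * Real.sinh l3 = Real.cosh l2 * Real.sinh x := by
          linarith [heq]
        rw [he']
        exact mul_lt_mul_of_pos_left hsx3 (by linarith)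
      exact lt_of_mul_lt_mul_right hmm hs3.le
    have h3 : |l1 - x| < |l2| := Real.cosh_lt_cosh.1 h2
    rw [abs_of_pos hl2pos, abs_of_pos (by linarith : 0 < l1 - x)] at h3
    refine ⟨hxl3, h3, ?_⟩
    rw [lt_div_iff₀ hsx, one_mul]
    exact hsx3
  refine ⟨⟨x₀, ⟨⟨hx0pos, hx0lt⟩, (hiff x₀).2 rfl⟩, ?_⟩, hprops⟩
  rintro y ⟨-, hy⟩
  exact (hiff y).1 hy
end

section
/- Let r1, r2, r3 > 0 and set l1 = r2 + r3, l2 = r1 + r3, l3 = r1 + r2. Then there exists a unique x ∈ (0, l3) such that sinh(l1) · sinh(l3 − x) = sinh(l2) · sinh(x); moreover this x satisfies x < l1 and l3 − x < l2 (so that the common value sinh(l1)/sinh(x) = sinh(l2)/sinh(l3 − x) is strictly greater than 1). -/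
/-!
The difference `a sinh (c - x) - b sinh x` is strictly decreasing in `x`, positive at `0` and
negative at `c`, so it has exactly one zero in `(0, c)`. If the zero satisfied `x ≥ l1`, then
`l3 - x < l2` because `l3 < l1 + l2`, and both factors on the left of the equation would be
smaller than those on the right. The substitution `x ↦ l3 - x` exchanges `l1` and `l2`.
-/

open Real Set

theorem strictAnti_mul_sinh_sub_sub_mul_sinh {a b : ℝ} (ha : 0 < a) (hb : 0 < b) (c : ℝ) :
    StrictAnti fun x => a * sinh (c - x) - b * sinh x := by
  intro x y hxy
  have hl : sinh (c - y) < sinh (c - x) := sinh_lt_sinh.2 (by linarith)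
  have hr : sinh x < sinh y := sinh_lt_sinh.2 hxy
  dsimp only
  gcongr

theorem existsUnique_mem_Ioo_mul_sinh_sub_eq_mul_sinh {a b c : ℝ} (ha : 0 < a) (hb : 0 < b)
    (hc : 0 < c) : ∃! x, x ∈ Ioo 0 c ∧ a * sinh (c - x) = b * sinh x := by
  set f : ℝ → ℝ := fun x => a * sinh (c - x) - b * sinh x
  have hf : StrictAnti f := strictAnti_mul_sinh_sub_sub_mul_sinh ha hb c
  have hroot : ∀ x, a * sinh (c - x) = b * sinh x ↔ f x = 0 := fun x => sub_eq_zero.symm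
  have hsign : (0 : ℝ) ∈ Ioo (f c) (f 0) := by
    constructor
    · simpa [f] using mul_pos hb (sinh_pos_iff.2 hc)
    · simpa [f] using mul_pos ha (sinh_pos_iff.2 hc)
  obtain ⟨x, hx, hfx⟩ :=
    intermediate_value_Ioo' hc.le (by fun_prop : Continuous f).continuousOn hsign
  refine ⟨x, ⟨hx, (hroot x).2 hfx⟩, fun y ⟨_, hy⟩ => hf.injective ?_⟩
  rw [hfx, ← hroot, hy]

theorem lt_of_sinh_mul_sinh_sub_eq {p q c x : ℝ} (hp : 0 < p) (hcx : 0 < c - x)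
    (hc : c < p + q) (h : sinh p * sinh (c - x) = sinh q * sinh x) : x < p := by
  by_contra! hpx
  have hsp : 0 < sinh p := sinh_pos_iff.2 hp
  have hsx : sinh p ≤ sinh x := sinh_le_sinh.2 hpx
  have hsq : sinh (c - x) < sinh q := sinh_lt_sinh.2 (by linarith)
  have hscx : 0 < sinh (c - x) := sinh_pos_iff.2 hcx
  have hlt : sinh p * sinh (c - x) < sinh q * sinh x :=
    calc sinh p * sinh (c - x) < sinh p * sinh q := by gcongr
      _ ≤ sinh x * sinh q := by gcongr; linarith
      _ = sinh q * sinh x := mul_comm _ _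
  exact hlt.ne h

theorem stmt_2 (r1 r2 r3 : ℝ) (hr1 : 0 < r1) (hr2 : 0 < r2) (hr3 : 0 < r3)
    (l1 l2 l3 : ℝ) (hl1 : l1 = r2 + r3) (hl2 : l2 = r1 + r3) (hl3 : l3 = r1 + r2) :
    (∃! x : ℝ, x ∈ Set.Ioo 0 l3 ∧
      Real.sinh l1 * Real.sinh (l3 - x) = Real.sinh l2 * Real.sinh x) ∧
    (∀ x : ℝ, x ∈ Set.Ioo 0 l3 →
      Real.sinh l1 * Real.sinh (l3 - x) = Real.sinh l2 * Real.sinh x →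
      x < l1 ∧ l3 - x < l2 ∧ 1 < Real.sinh l1 / Real.sinh x) := by
  have hl1p : 0 < l1 := by linarith
  have hl2p : 0 < l2 := by linarith
  have hl3p : 0 < l3 := by linarith
  refine ⟨existsUnique_mem_Ioo_mul_sinh_sub_eq_mul_sinh (sinh_pos_iff.2 hl1p)
    (sinh_pos_iff.2 hl2p) hl3p, fun x ⟨hx0, hxl3⟩ h => ?_⟩
  have hx1 : x < l1 := lt_of_sinh_mul_sinh_sub_eq hl1p (by linarith) (by linarith) h
  have hx2 : l3 - x < l2 :=
    lt_of_sinh_mul_sinh_sub_eq (c := l3) (q := l1) hl2p (by linarith) (by linarith) (by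
      rw [sub_sub_cancel]; exact h.symm)
  exact ⟨hx1, hx2, (one_lt_div (sinh_pos_iff.2 hx0)).2 (sinh_lt_sinh.2 hx1)⟩
end

section
/- For k1 > 1 and k2 > 1, define l1(k1, k2) = (2/√(k1² − 1)) · arctan(√(k1² − 1)/k2) and l2(k1, k2) = (2/√(k2² − 1)) · arctan(√(k2² − 1)/k1). Then the partial derivative of l1 with respect to k2 and the partial derivative of l2 with respect to k1 both exist and are both equal to 2/(1 − k1² − k2²). -/
open Real

theorem hasDerivAt_div_mul_arctan_div {a b : ℝ} (c : ℝ) (ha : a ≠ 0) (hb : b ≠ 0) :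
    HasDerivAt (fun y : ℝ => c / a * arctan (a / y)) (-c / (b ^ 2 + a ^ 2)) b := by
  have h_div : HasDerivAt (fun y : ℝ => a / y) (-(a / b ^ 2)) b := by
    simpa [div_eq_mul_inv] using (hasDerivAt_inv hb).const_mul a
  refine (((hasDerivAt_arctan (a / b)).comp b h_div).const_mul (c / a)).congr_deriv ?_
  field_simp

theorem hasDerivAt_two_div_sqrt_mul_arctan_sqrt_div {k m : ℝ} (hk : 1 < k ^ 2) (hm : m ≠ 0) :
    HasDerivAt (fun y : ℝ => 2 / √(k ^ 2 - 1) * arctan (√(k ^ 2 - 1) / y))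
      (2 / (1 - k ^ 2 - m ^ 2)) m := by
  have hpos : 0 < k ^ 2 - 1 := sub_pos.mpr hk
  convert hasDerivAt_div_mul_arctan_div 2 (sqrt_pos.mpr hpos).ne' hm using 1
  rw [sq_sqrt hpos.le, div_eq_div_iff (by nlinarith) (by nlinarith)]
  ring

theorem stmt_5 (k1 k2 : ℝ) (hk1 : 1 < k1) (hk2 : 1 < k2) :
    HasDerivAt
      (fun y : ℝ => 2 / Real.sqrt (k1 ^ 2 - 1) * Real.arctan (Real.sqrt (k1 ^ 2 - 1) / y))
      (2 / (1 - k1 ^ 2 - k2 ^ 2)) k2 ∧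
    HasDerivAt
      (fun x : ℝ => 2 / Real.sqrt (k2 ^ 2 - 1) * Real.arctan (Real.sqrt (k2 ^ 2 - 1) / x))
      (2 / (1 - k1 ^ 2 - k2 ^ 2)) k1 := by
  have hk1_sq : 1 < k1 ^ 2 := one_lt_pow₀ hk1 two_ne_zero
  have hk2_sq : 1 < k2 ^ 2 := one_lt_pow₀ hk2 two_ne_zero
  refine ⟨hasDerivAt_two_div_sqrt_mul_arctan_sqrt_div hk1_sq (by positivity), ?_⟩
  convert hasDerivAt_two_div_sqrt_mul_arctan_sqrt_div hk2_sq (m := k1) (by positivity) using 2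
  ring
end

section
/- For 0 < k1 < 1 and k2 > 1, define l1(k1, k2) = (2/√(1 − k1²)) · artanh(√(1 − k1²)/k2) and l2(k1, k2) = (2/√(k2² − 1)) · arctan(√(k2² − 1)/k1). Then the partial derivative of l1 with respect to k2 and the partial derivative of l2 with respect to k1 both exist and are both equal to 2/(1 − k1² − k2²). -/
/-! By the chain rule, `t ↦ artanh (c / t)` and `t ↦ arctan (c / t)` have derivatives
`-c / (t² - c²)` and `-c / (t² + c²)`. With `c = √(1 - k1²)` resp. `c = √(k2² - 1)` the prefactor
`2 / c` cancels `c`, and both denominators become `k1² + k2² - 1`. -/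

open Real

/-- The inverse hyperbolic tangent, `artanh x = (1/2) · log((1 + x)/(1 - x))`. -/
noncomputable def artanh (x : ℝ) : ℝ := Real.log ((1 + x) / (1 - x)) / 2

theorem hasDerivAt_artanh {x : ℝ} (hx : x ≠ 1) (hx' : x ≠ -1) :
    HasDerivAt _root_.artanh (1 / (1 - x ^ 2)) x := by
  have h1 : 1 - x ≠ 0 := sub_ne_zero.mpr hx.symm
  have h2 : 1 + x ≠ 0 := fun h => hx' (by linarith)
  have h3 : 1 - x ^ 2 ≠ 0 := by
    rw [show 1 - x ^ 2 = (1 - x) * (1 + x) by ring]; exact mul_ne_zero h1 h2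
  have hq := ((hasDerivAt_id x).const_add 1).div ((hasDerivAt_id x).const_sub 1) h1
  refine ((hq.log (div_ne_zero h2 h1)).div_const 2).congr_deriv ?_
  simp only [id, Pi.div_apply]
  field_simp
  ring

theorem hasDerivAt_artanh_const_div {c y : ℝ} (hy : y ≠ 0) (hc : c ≠ y) (hc' : c ≠ -y) :
    HasDerivAt (fun t => _root_.artanh (c / t)) (-c / (y ^ 2 - c ^ 2)) y := by
  have hcy : c / y ≠ 1 := fun h => hc (by rwa [div_eq_one_iff_eq hy] at h)
  have hcy' : c / y ≠ -1 := fun h => hc' (by rwa [div_eq_iff hy, neg_one_mul] at h)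
  have hsq : y ^ 2 - c ^ 2 ≠ 0 := by
    rw [sub_ne_zero]; exact fun h => (sq_eq_sq_iff_eq_or_eq_neg.mp h.symm).elim hc hc'
  refine ((hasDerivAt_artanh hcy hcy').comp y ((hasDerivAt_inv hy).const_mul c)).congr_deriv ?_
  field_simp

theorem hasDerivAt_arctan_const_div {c x : ℝ} (hx : x ≠ 0) :
    HasDerivAt (fun t => arctan (c / t)) (-c / (x ^ 2 + c ^ 2)) x := by
  refine ((hasDerivAt_inv hx).const_mul c).arctan.congr_deriv ?_
  field_simp

theorem stmt_6 (k1 k2 : ℝ) (hk1 : 0 < k1) (hk1' : k1 < 1) (hk2 : 1 < k2) :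
    HasDerivAt
      (fun y : ℝ => 2 / Real.sqrt (1 - k1 ^ 2) * _root_.artanh (Real.sqrt (1 - k1 ^ 2) / y))
      (2 / (1 - k1 ^ 2 - k2 ^ 2)) k2 ∧
    HasDerivAt
      (fun x : ℝ => 2 / Real.sqrt (k2 ^ 2 - 1) * Real.arctan (Real.sqrt (k2 ^ 2 - 1) / x))
      (2 / (1 - k1 ^ 2 - k2 ^ 2)) k1 := by
  set a := √(1 - k1 ^ 2)
  set b := √(k2 ^ 2 - 1)
  have ha : 0 < a := Real.sqrt_pos.mpr (by nlinarith)
  have hb : 0 < b := Real.sqrt_pos.mpr (by nlinarith)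
  have ha2 : a ^ 2 = 1 - k1 ^ 2 := Real.sq_sqrt (by nlinarith)
  have hb2 : b ^ 2 = k2 ^ 2 - 1 := Real.sq_sqrt (by nlinarith)
  have ha1 : a < 1 := by nlinarith
  constructor
  · refine ((hasDerivAt_artanh_const_div (by positivity) (by linarith) (by linarith)).const_mul
      (2 / a)).congr_deriv ?_
    have : k2 ^ 2 - a ^ 2 ≠ 0 := by nlinarith
    rw [show 1 - k1 ^ 2 - k2 ^ 2 = -(k2 ^ 2 - a ^ 2) by rw [ha2]; ring]
    field_simp
  · refine ((hasDerivAt_arctan_const_div hk1.ne').const_mul (2 / b)).congr_deriv ?_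
    rw [show 1 - k1 ^ 2 - k2 ^ 2 = -(k1 ^ 2 + b ^ 2) by rw [hb2]; ring]
    field_simp
end

section
/- For all r1, r2, r3 > 0, with θ_i = arccos[(cosh(r_i + r_j)·cosh(r_i + r_k) − cosh(r_j + r_k)) / (sinh(r_i + r_j)·sinh(r_i + r_k))] for {i,j,k} = {1,2,3}, one has θ1·cosh(r1) + θ2·cosh(r2) + θ3·cosh(r3) < π. -/
/-! Fix `r₂, r₃` and let the first radius `x` grow from `0`. At `x = 0` the first circle shrinks to
the tangency point of the other two: its angle is `π` and the other two angles vanish, so the total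
curvature is `π`. Its derivative in `x` simplifies to `sinh x * (θ₁ - 2 * tan (θ₁ / 2))`, which is
negative because `θ < 2 * tan (θ / 2)` for `0 < θ < π`. -/

open Real

/-- The inner angle at the center of the circle of radius `ri` in the triangle formed by the
centers of three mutually externally tangent hyperbolic circles of radii `ri`, `rj`, `rk`. -/
noncomputable def innerAngle (ri rj rk : ℝ) : ℝ :=
  Real.arccos ((Real.cosh (ri + rj) * Real.cosh (ri + rk) - Real.cosh (rj + rk)) /
    (Real.sinh (ri + rj) * Real.sinh (ri + rk)))

open Set

noncomputable def angleNum (ri rj rk : ℝ) : ℝ := cosh (ri + rj) * cosh (ri + rk) - cosh (rj + rk)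

noncomputable def angleDen (ri rj rk : ℝ) : ℝ := sinh (ri + rj) * sinh (ri + rk)

theorem innerAngle_eq_arccos (ri rj rk : ℝ) :
    innerAngle ri rj rk = arccos (angleNum ri rj rk / angleDen ri rj rk) := rfl

/-- The hyperbolic Heron term
`sinh s * sinh (s - (b + c)) * sinh (s - (a + c)) * sinh (s - (a + b))` of the triangle of centres,
whose semiperimeter is `s = a + b + c`. -/
noncomputable def heron (a b c : ℝ) : ℝ := sinh (a + b + c) * sinh a * sinh b * sinh c

/-- `tan (innerAngle a b c / 2)`, by the hyperbolic half-angle formula. -/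
noncomputable def halfAngleTan (a b c : ℝ) : ℝ := sinh b * sinh c / √(heron a b c)

noncomputable def totalCurvature (a b c : ℝ) : ℝ :=
  innerAngle a b c * cosh a + innerAngle b a c * cosh b + innerAngle c a b * cosh c

theorem angleDen_sub_angleNum (a b c : ℝ) :
    angleDen a b c - angleNum a b c = 2 * sinh b * sinh c := by
  simp only [angleDen, angleNum, cosh_eq, sinh_eq, exp_add, exp_neg]; field_simp; ring

theorem angleDen_add_angleNum (a b c : ℝ) :
    angleDen a b c + angleNum a b c = 2 * sinh (a + b + c) * sinh a := by
  simp only [angleDen, angleNum, cosh_eq, sinh_eq, exp_add, exp_neg]; field_simp; ring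

theorem angleDen_sq_sub_angleNum_sq (a b c : ℝ) :
    angleDen a b c ^ 2 - angleNum a b c ^ 2 = 4 * heron a b c := by
  rw [heron]
  linear_combination (angleDen a b c + angleNum a b c) * angleDen_sub_angleNum a b c +
    2 * sinh b * sinh c * angleDen_add_angleNum a b c

theorem sqrt_angleDen_sq_sub_angleNum_sq (a b c : ℝ) :
    √(angleDen a b c ^ 2 - angleNum a b c ^ 2) = 2 * √(heron a b c) := by
  rw [angleDen_sq_sub_angleNum_sq, show (4 : ℝ) = 2 ^ 2 by norm_num, sqrt_mul (by positivity),
    sqrt_sq zero_le_two]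

theorem sqrt_one_sub_div_sq {n d : ℝ} (hd : 0 < d) :
    √(1 - (n / d) ^ 2) = √(d ^ 2 - n ^ 2) / d := by
  rw [← sqrt_sq hd.le, ← sqrt_div' _ (by positivity), sqrt_sq hd.le]
  congr 1; field_simp

theorem hasDerivAt_arccos_div {N D : ℝ → ℝ} {N' D' x : ℝ} (hN : HasDerivAt N N' x)
    (hD : HasDerivAt D D' x) (hpos : 0 < D x) (hlt : N x ^ 2 < D x ^ 2) :
    HasDerivAt (fun y => arccos (N y / D y))
      (-(N' * D x - N x * D') / (D x * √(D x ^ 2 - N x ^ 2))) x := by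
  have habs : |N x / D x| < 1 := by
    rw [abs_div, abs_of_pos hpos, div_lt_one hpos]; exact abs_lt_of_sq_lt_sq hlt hpos.le
  obtain ⟨hgt, hlt'⟩ := abs_lt.mp habs
  refine ((hasDerivAt_arccos hgt.ne' hlt'.ne).comp x (hN.div hD hpos.ne')).congr_deriv ?_
  have hS : 0 < √(D x ^ 2 - N x ^ 2) := sqrt_pos.mpr (by linarith)
  rw [sqrt_one_sub_div_sq hpos]; field_simp

theorem arccos_div_lt {n d : ℝ} (hd : 0 < d) (h : n ^ 2 < d ^ 2) :
    arccos (n / d) < 2 * √(d ^ 2 - n ^ 2) / (d + n) := by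
  have habs : |n / d| < 1 := by
    rw [abs_div, abs_of_pos hd, div_lt_one hd]; exact abs_lt_of_sq_lt_sq h hd.le
  obtain ⟨hgt, hlt⟩ := abs_lt.mp habs
  set φ := arccos (n / d) / 2 with hφ
  have harc : arccos (n / d) = 2 * φ := by rw [hφ]; ring
  have hφpos : 0 < φ := by have := arccos_pos.mpr hlt; positivity
  have hφlt : φ < π / 2 := by have := arccos_lt_pi.mpr hgt; linarith
  have hcos : 0 < cos φ := cos_pos_of_mem_Ioo ⟨by linarith, hφlt⟩
  have hsin2 : √(d ^ 2 - n ^ 2) = d * (2 * sin φ * cos φ) := by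
    rw [← sin_two_mul, ← harc, sin_arccos, sqrt_one_sub_div_sq hd]; field_simp
  have hcos2 : n = d * (2 * cos φ ^ 2 - 1) := by
    rw [← cos_two_mul, ← harc, cos_arccos hgt.le hlt.le]; field_simp
  calc arccos (n / d) = 2 * φ := harc
    _ < 2 * tan φ := by linarith [lt_tan hφpos hφlt]
    _ = 2 * √(d ^ 2 - n ^ 2) / (d + n) := by
      rw [hsin2, hcos2, tan_eq_sin_div_cos]; field_simp; ring

section

variable {a b c : ℝ}

theorem angleDen_pos (hab : 0 < a + b) (hac : 0 < a + c) : 0 < angleDen a b c :=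
  mul_pos (sinh_pos_iff.mpr hab) (sinh_pos_iff.mpr hac)

section

variable (ha : 0 < a) (hb : 0 < b) (hc : 0 < c)
include ha hb hc

theorem heron_pos : 0 < heron a b c := by
  have : 0 < sinh (a + b + c) := sinh_pos_iff.mpr (by positivity)
  have := sinh_pos_iff.mpr ha
  have := sinh_pos_iff.mpr hb
  have := sinh_pos_iff.mpr hc
  unfold heron; positivity

theorem angleNum_sq_lt_angleDen_sq : angleNum a b c ^ 2 < angleDen a b c ^ 2 := by
  linarith [angleDen_sq_sub_angleNum_sq a b c, heron_pos ha hb hc]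

theorem innerAngle_lt_two_mul_halfAngleTan : innerAngle a b c < 2 * halfAngleTan a b c := by
  have hH := heron_pos ha hb hc
  have : 0 < sinh (a + b + c) := sinh_pos_iff.mpr (by positivity)
  have := sinh_pos_iff.mpr ha
  calc innerAngle a b c < 2 * √(angleDen a b c ^ 2 - angleNum a b c ^ 2) /
        (angleDen a b c + angleNum a b c) :=
      arccos_div_lt (angleDen_pos (by positivity) (by positivity))
        (angleNum_sq_lt_angleDen_sq ha hb hc)
    _ = 2 * halfAngleTan a b c := by
      have hsq := sq_sqrt hH.le
      rw [sqrt_angleDen_sq_sub_angleNum_sq, angleDen_add_angleNum, halfAngleTan, heron]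
      rw [heron] at hsq
      field_simp
      linear_combination hsq

theorem hasDerivAt_innerAngle_left :
    HasDerivAt (fun x => innerAngle x b c)
      (-(halfAngleTan a b c * sinh (2 * a + b + c)) / angleDen a b c) a := by
  have hN : HasDerivAt (fun x => angleNum x b c)
      (sinh (a + b) * cosh (a + c) + cosh (a + b) * sinh (a + c)) a :=
    (((hasDerivAt_cosh _).comp_add_const a b).mul
      ((hasDerivAt_cosh _).comp_add_const a c)).sub_const _
  have hD : HasDerivAt (fun x => angleDen x b c)
      (cosh (a + b) * sinh (a + c) + sinh (a + b) * cosh (a + c)) a :=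
    ((hasDerivAt_sinh _).comp_add_const a b).mul ((hasDerivAt_sinh _).comp_add_const a c)
  refine (hasDerivAt_arccos_div hN hD (angleDen_pos (by positivity) (by positivity))
    (angleNum_sq_lt_angleDen_sq ha hb hc)).congr_deriv ?_
  have hsum : sinh (a + b) * cosh (a + c) + cosh (a + b) * sinh (a + c) = sinh (2 * a + b + c) := by
    rw [← sinh_add]; ring_nf
  have hH := sqrt_pos.mpr (heron_pos ha hb hc)
  have hDpos : 0 < angleDen a b c := angleDen_pos (by positivity) (by positivity)
  rw [sqrt_angleDen_sq_sub_angleNum_sq, halfAngleTan, ← hsum]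
  field_simp
  linear_combination (-(sinh (a + b) * cosh (a + c) + cosh (a + b) * sinh (a + c))) *
    angleDen_sub_angleNum a b c

theorem hasDerivAt_innerAngle_mid :
    HasDerivAt (fun x => innerAngle b x c) (halfAngleTan a b c / sinh (a + b)) a := by
  have hN : HasDerivAt (fun x => angleNum b x c) (sinh (b + a) * cosh (b + c) - sinh (a + c)) a :=
    (((hasDerivAt_cosh _).comp_const_add b a).mul_const _).sub
      ((hasDerivAt_cosh _).comp_add_const a c)
  have hD : HasDerivAt (fun x => angleDen b x c) (cosh (b + a) * sinh (b + c)) a :=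
    ((hasDerivAt_sinh _).comp_const_add b a).mul_const _
  refine (hasDerivAt_arccos_div hN hD (angleDen_pos (by positivity) (by positivity))
    (angleNum_sq_lt_angleDen_sq hb ha hc)).congr_deriv ?_
  have hH := sqrt_pos.mpr (heron_pos ha hb hc)
  have hW : (sinh (b + a) * cosh (b + c) - sinh (a + c)) * angleDen b a c -
      angleNum b a c * (cosh (b + a) * sinh (b + c)) = -(2 * sinh b * sinh c * sinh (b + c)) := by
    simp only [angleDen, angleNum, cosh_eq, sinh_eq, exp_add, exp_neg]; field_simp; ring
  have hsym : heron b a c = heron a b c := by unfold heron; rw [add_comm b a]; ring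
  rw [sqrt_angleDen_sq_sub_angleNum_sq, hW, hsym, halfAngleTan, angleDen, add_comm b a]
  field_simp

theorem hasDerivAt_totalCurvature_left :
    HasDerivAt (fun x => totalCurvature x b c)
      (sinh a * (innerAngle a b c - 2 * halfAngleTan a b c)) a := by
  refine ((((hasDerivAt_innerAngle_left ha hb hc).mul (hasDerivAt_cosh a)).add
    ((hasDerivAt_innerAngle_mid ha hb hc).mul_const (cosh b))).add
    ((hasDerivAt_innerAngle_mid ha hc hb).mul_const (cosh c))).congr_deriv ?_
  have hH : heron a c b = heron a b c := by unfold heron; rw [add_right_comm]; ring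
  have hT : halfAngleTan a c b = halfAngleTan a b c := by
    rw [halfAngleTan, halfAngleTan, hH, mul_comm]
  have hcosh : cosh b * sinh (a + c) + cosh c * sinh (a + b) - cosh a * sinh (2 * a + b + c) =
      -(2 * sinh a * sinh (a + b) * sinh (a + c)) := by
    simp only [cosh_eq, sinh_eq, exp_add, exp_neg, two_mul]; field_simp; ring
  have := sinh_pos_iff.mpr (add_pos ha hb)
  have := sinh_pos_iff.mpr (add_pos ha hc)
  rw [hT, angleDen]
  field_simp
  linear_combination halfAngleTan a b c * hcosh

end

theorem continuousOn_totalCurvature (hb : 0 < b) (hc : 0 < c) :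
    ContinuousOn (fun x => totalCurvature x b c) (Ici 0) := by
  intro x hx
  have hx : 0 ≤ x := hx
  refine ContinuousAt.continuousWithinAt ?_
  unfold totalCurvature innerAngle
  fun_prop (disch := exact (angleDen_pos (by linarith) (by linarith)).ne')

theorem innerAngle_zero_left (hb : 0 < b) (hc : 0 < c) : innerAngle 0 b c = π := by
  have hD := angleDen_pos (a := 0) (b := b) (c := c) (by simpa) (by simpa)
  have h := angleDen_add_angleNum 0 b c
  rw [sinh_zero, mul_zero] at h
  rw [innerAngle_eq_arccos, show angleNum 0 b c = -angleDen 0 b c by linarith, neg_div,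
    div_self hD.ne', arccos_neg_one]

theorem innerAngle_zero_mid (hb : 0 < b) (hc : 0 < c) : innerAngle b 0 c = 0 := by
  have hD := angleDen_pos (a := b) (b := 0) (c := c) (by simpa) (by positivity)
  have h := angleDen_sub_angleNum b 0 c
  rw [sinh_zero, mul_zero, zero_mul] at h
  rw [innerAngle_eq_arccos, show angleNum b 0 c = angleDen b 0 c by linarith,
    div_self hD.ne', arccos_one]

theorem totalCurvature_zero_left (hb : 0 < b) (hc : 0 < c) : totalCurvature 0 b c = π := by
  rw [totalCurvature, innerAngle_zero_left hb hc, innerAngle_zero_mid hb hc,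
    innerAngle_zero_mid hc hb, cosh_zero]
  ring

theorem strictAntiOn_totalCurvature (hb : 0 < b) (hc : 0 < c) :
    StrictAntiOn (fun x => totalCurvature x b c) (Ici 0) := by
  refine strictAntiOn_of_hasDerivWithinAt_neg (convex_Ici 0) (continuousOn_totalCurvature hb hc)
    (f' := fun x => sinh x * (innerAngle x b c - 2 * halfAngleTan x b c))
    (fun x hx => ?_) (fun x hx => ?_) <;> rw [interior_Ici, mem_Ioi] at hx
  · exact (hasDerivAt_totalCurvature_left hx hb hc).hasDerivWithinAt
  · exact mul_neg_of_pos_of_neg (sinh_pos_iff.mpr hx)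
      (sub_neg.mpr (innerAngle_lt_two_mul_halfAngleTan hx hb hc))

end

theorem stmt_10 (r1 r2 r3 : ℝ) (h1 : 0 < r1) (h2 : 0 < r2) (h3 : 0 < r3) :
    innerAngle r1 r2 r3 * Real.cosh r1 + innerAngle r2 r1 r3 * Real.cosh r2 +
      innerAngle r3 r1 r2 * Real.cosh r3 < π := by
  have h : totalCurvature r1 r2 r3 < totalCurvature 0 r2 r3 :=
    strictAntiOn_totalCurvature h2 h3 self_mem_Ici h1.le h1
  rwa [totalCurvature_zero_left h2 h3] at h
end

section
/- Fix a > 0. For r1, r2 > 0, consider the hyperbolic triangle with side lengths r1 + r2, r1 + a, r2 + a, and let θ1 = arccos[(cosh(r1 + r2)·cosh(r1 + a) − cosh(r2 + a)) / (sinh(r1 + r2)·sinh(r1 + a))] and θ2 = arccos[(cosh(r1 + r2)·cosh(r2 + a) − cosh(r1 + a)) / (sinh(r1 + r2)·sinh(r2 + a))]. Then θ1·cosh(r1) + θ2·cosh(r2) tends to π as (r1, r2) → (0, 0) with r1, r2 > 0. -/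
/-!
Write `A`, `B` for the cosines of the two angles. The hyperbolic law of cosines gives
`A + B = 2 sinh r₁ sinh r₂ sinh (r₁ + r₂ + 2a) / (sinh (r₁ + r₂) sinh (r₁ + a) sinh (r₂ + a))`,
which tends to `0` because `sinh r₂ / sinh (r₁ + r₂) ≤ 1`. The angles themselves need not
converge (their limits depend on how `r₁ / r₂` behaves), but `θ₂ = π - arccos (-B)`, so
`θ₁ + θ₂ - π = arccos A - arccos (-B) → 0` by uniform continuity of `arccos`. The angles stay in
`[0, π]`, so the factors `cosh rᵢ → 1` do not change the limit.
-/

open Real Filter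

open Topology Uniformity

namespace Real

theorem uniformContinuous_arcsin : UniformContinuous arcsin := by
  have h : UniformContinuous fun x : Set.Icc (-1 : ℝ) 1 => arcsin x :=
    CompactSpace.uniformContinuous_of_continuous (continuous_arcsin.comp continuous_subtype_val)
  have hproj : arcsin = (fun x : Set.Icc (-1 : ℝ) 1 => arcsin x) ∘
      Set.projIcc (-1) 1 (neg_le_self zero_le_one) :=
    funext fun x => (arcsin_projIcc x).symm
  rw [hproj]
  exact h.comp (LipschitzWith.projIcc _).uniformContinuous

theorem uniformContinuous_arccos : UniformContinuous arccos := by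
  rw [show arccos = fun x => π / 2 - arcsin x from funext arccos_eq_pi_div_two_sub_arcsin]
  exact uniformContinuous_const.sub uniformContinuous_arcsin

theorem tendsto_arccos_add_arccos {α : Type*} {l : Filter α} {u v : α → ℝ}
    (h : Tendsto (fun p => u p + v p) l (𝓝 0)) :
    Tendsto (fun p => arccos (u p) + arccos (v p)) l (𝓝 π) := by
  have huv : Tendsto (fun p => (u p, -v p)) l (𝓤 ℝ) := by
    rw [tendsto_uniformity_iff_dist_tendsto_zero]
    simpa [dist_eq] using h.abs
  have := tendsto_uniformity_iff_dist_tendsto_zero.1 (Tendsto.comp uniformContinuous_arccos huv)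
  rw [tendsto_iff_dist_tendsto_zero]
  convert this using 2 with p
  simp only [dist_eq, Function.comp_apply, arccos_neg]
  congr 1
  ring

theorem tendsto_arccos_mul_add_arccos_mul {α : Type*} {l : Filter α} {u v c d : α → ℝ}
    (huv : Tendsto (fun p => u p + v p) l (𝓝 0)) (hc : Tendsto c l (𝓝 1))
    (hd : Tendsto d l (𝓝 1)) :
    Tendsto (fun p => arccos (u p) * c p + arccos (v p) * d p) l (𝓝 π) := by
  have hbdd (w : α → ℝ) : IsBoundedUnder (· ≤ ·) l ((‖·‖) ∘ fun p => arccos (w p)) :=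
    isBoundedUnder_of ⟨π, fun p => by simp [abs_of_nonneg (arccos_nonneg _), arccos_le_pi]⟩
  have hc' := isBoundedUnder_le_mul_tendsto_zero (hbdd u) (by simpa using hc.sub_const 1)
  have hd' := isBoundedUnder_le_mul_tendsto_zero (hbdd v) (by simpa using hd.sub_const 1)
  have h := (tendsto_arccos_add_arccos huv).add (hc'.add hd')
  rw [add_zero, add_zero] at h
  exact h.congr fun p => by ring

end Real

noncomputable def innerAngleCos (ri rj rk : ℝ) : ℝ :=
  (cosh (ri + rj) * cosh (ri + rk) - cosh (rj + rk)) / (sinh (ri + rj) * sinh (ri + rk))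

theorem innerAngle_eq_arccos_innerAngleCos (ri rj rk : ℝ) :
    innerAngle ri rj rk = arccos (innerAngleCos ri rj rk) := rfl

theorem cosh_mul_cosh_sub_cosh_mul_sinh_add (x y a : ℝ) :
    (cosh (x + y) * cosh (x + a) - cosh (y + a)) * sinh (y + a) +
      (cosh (x + y) * cosh (y + a) - cosh (x + a)) * sinh (x + a) =
    2 * sinh x * sinh y * sinh (x + y + 2 * a) := by
  simp only [cosh_eq, sinh_eq, exp_neg, two_mul, exp_add]
  field_simp
  ring

theorem innerAngleCos_add_innerAngleCos {x y a : ℝ} (hxy : x + y ≠ 0) (hxa : x + a ≠ 0)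
    (hya : y + a ≠ 0) :
    innerAngleCos x y a + innerAngleCos y x a =
      2 * sinh x * sinh (x + y + 2 * a) / (sinh (x + a) * sinh (y + a)) *
        (sinh y / sinh (x + y)) := by
  rw [← sinh_ne_zero] at hxy hxa hya
  rw [innerAngleCos, innerAngleCos, add_comm y x]
  field_simp
  linear_combination (norm := ring_nf) cosh_mul_cosh_sub_cosh_mul_sinh_add x y a

theorem tendsto_innerAngleCos_add_innerAngleCos {a : ℝ} (ha : 0 < a) :
    Tendsto (fun p : ℝ × ℝ => innerAngleCos p.1 p.2 a + innerAngleCos p.2 p.1 a)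
      (𝓝[{p | 0 < p.1 ∧ 0 < p.2}] (0, 0)) (𝓝 0) := by
  have hpos : ∀ᶠ p in 𝓝[{p : ℝ × ℝ | 0 < p.1 ∧ 0 < p.2}] (0, 0), 0 < p.1 ∧ 0 < p.2 :=
    eventually_mem_nhdsWithin
  have hg : Tendsto (fun p : ℝ × ℝ =>
      2 * sinh p.1 * sinh (p.1 + p.2 + 2 * a) / (sinh (p.1 + a) * sinh (p.2 + a)))
      (𝓝[{p | 0 < p.1 ∧ 0 < p.2}] (0, 0)) (𝓝 0) := by
    have hsinh : sinh a ≠ 0 := sinh_ne_zero.2 ha.ne'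
    have hcont : ContinuousAt (fun p : ℝ × ℝ =>
        2 * sinh p.1 * sinh (p.1 + p.2 + 2 * a) / (sinh (p.1 + a) * sinh (p.2 + a))) (0, 0) :=
      ContinuousAt.div (by fun_prop) (by fun_prop) (by simpa using hsinh)
    simpa using tendsto_nhdsWithin_of_tendsto_nhds hcont.tendsto
  have hr : IsBoundedUnder (· ≤ ·) (𝓝[{p : ℝ × ℝ | 0 < p.1 ∧ 0 < p.2}] (0, 0))
      ((‖·‖) ∘ fun p : ℝ × ℝ => sinh p.2 / sinh (p.1 + p.2)) := by
    refine isBoundedUnder_of_eventually_le (a := 1) ?_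
    filter_upwards [hpos] with p ⟨hx, hy⟩
    have hsy : 0 ≤ sinh p.2 := (sinh_pos_iff.2 hy).le
    have hsxy : 0 ≤ sinh (p.1 + p.2) := (sinh_pos_iff.2 (by linarith)).le
    rw [Function.comp_apply, norm_div, Real.norm_of_nonneg hsy, Real.norm_of_nonneg hsxy]
    exact div_le_one_of_le₀ (sinh_le_sinh.2 (by linarith)) hsxy
  refine (hg.zero_mul_isBoundedUnder_le hr).congr' ?_
  filter_upwards [hpos] with p ⟨hx, hy⟩
  exact (innerAngleCos_add_innerAngleCos (by linarith) (by linarith) (by linarith)).symm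

theorem stmt_11 (a : ℝ) (ha : 0 < a) :
    Tendsto
      (fun p : ℝ × ℝ =>
        innerAngle p.1 p.2 a * Real.cosh p.1 + innerAngle p.2 p.1 a * Real.cosh p.2)
      (nhdsWithin (0, 0) {p : ℝ × ℝ | 0 < p.1 ∧ 0 < p.2})
      (nhds π) := by
  have hcosh {f : ℝ × ℝ → ℝ} (hf : Continuous f) (hf0 : f (0, 0) = 0) :
      Tendsto (fun p => cosh (f p)) (𝓝[{p : ℝ × ℝ | 0 < p.1 ∧ 0 < p.2}] (0, 0)) (𝓝 1) := by
    refine tendsto_nhdsWithin_of_tendsto_nhds ?_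
    simpa [hf0] using (by fun_prop : Continuous fun p => cosh (f p)).tendsto (0, 0)
  simp only [innerAngle_eq_arccos_innerAngleCos]
  exact tendsto_arccos_mul_add_arccos_mul (tendsto_innerAngleCos_add_innerAngleCos ha)
    (hcosh continuous_fst rfl) (hcosh continuous_snd rfl)
end

section
/- Fix r2, r3 > 0. For r1 > 0, let θ2(r1) = arccos[(cosh(r1 + r2)·cosh(r2 + r3) − cosh(r1 + r3)) / (sinh(r1 + r2)·sinh(r2 + r3))] be the inner angle at the vertex corresponding to r2 of the hyperbolic triangle with side lengths r1 + r2, r2 + r3, r1 + r3. Then the function r1 ↦ θ2(r1)·cosh(r2) is strictly increasing on (0, +∞). -/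
open Real

theorem stmt_12 (r2 r3 : ℝ) (h2 : 0 < r2) (h3 : 0 < r3) :
    StrictMonoOn
      (fun r1 : ℝ =>
        Real.arccos ((Real.cosh (r1 + r2) * Real.cosh (r2 + r3) - Real.cosh (r1 + r3)) /
          (Real.sinh (r1 + r2) * Real.sinh (r2 + r3))) * Real.cosh r2)
      (Set.Ioi 0) := by
  have hb : (0:ℝ) < Real.sinh (r2 + r3) := Real.sinh_pos_iff.2 (by linarith)
  have s2 := Real.sinh_pos_iff.2 h2
  have s3 := Real.sinh_pos_iff.2 h3
  have c2 := Real.cosh_pos (x := r2)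
  have c3 := Real.cosh_pos (x := r3)
  have key : ∀ r1 : ℝ, 0 < r1 →
      (Real.cosh (r1 + r2) * Real.cosh (r2 + r3) - Real.cosh (r1 + r3)) /
        (Real.sinh (r1 + r2) * Real.sinh (r2 + r3)) ∈ Set.Icc (-1:ℝ) 1 := by
    intro r1 h1
    have ha : (0:ℝ) < Real.sinh (r1 + r2) := Real.sinh_pos_iff.2 (by linarith)
    have hD : (0:ℝ) < Real.sinh (r1 + r2) * Real.sinh (r2 + r3) := mul_pos ha hb
    have s1 := Real.sinh_pos_iff.2 h1
    have c1 := Real.cosh_pos (x := r1)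
    constructor
    · rw [le_div_iff₀ hD]
      have hE : Real.cosh (r1 + r2) * Real.cosh (r2 + r3) - Real.cosh (r1 + r3)
          + Real.sinh (r1 + r2) * Real.sinh (r2 + r3)
          = 2 * Real.sinh r2 ^ 2 * (Real.cosh r1 * Real.cosh r3 + Real.sinh r1 * Real.sinh r3)
            + 2 * Real.cosh r2 * Real.sinh r2 *
              (Real.cosh r1 * Real.sinh r3 + Real.sinh r1 * Real.cosh r3) := by
        simp only [Real.cosh_add, Real.sinh_add]
        linear_combination (Real.cosh r1 * Real.cosh r3 + Real.sinh r1 * Real.sinh r3) *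
          Real.cosh_sq_sub_sinh_sq r2
      nlinarith [mul_pos c1 c3, mul_pos s1 s3, mul_pos c1 s3, mul_pos s1 c3,
        mul_pos c2 s2, sq_nonneg (Real.sinh r2)]
    · rw [div_le_one hD]
      have hE : Real.sinh (r1 + r2) * Real.sinh (r2 + r3)
          - (Real.cosh (r1 + r2) * Real.cosh (r2 + r3) - Real.cosh (r1 + r3))
          = 2 * Real.sinh r1 * Real.sinh r3 := by
        simp only [Real.cosh_add, Real.sinh_add]
        linear_combination (Real.sinh r1 * Real.sinh r3 - Real.cosh r1 * Real.cosh r3) *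
          Real.cosh_sq_sub_sinh_sq r2
      nlinarith [mul_pos s1 s3]
  intro x hx y hy hxy
  simp only
  have hx' : (0:ℝ) < x := hx
  have hy' : (0:ℝ) < y := hy
  have hax : (0:ℝ) < Real.sinh (x + r2) := Real.sinh_pos_iff.2 (by linarith)
  have hay : (0:ℝ) < Real.sinh (y + r2) := Real.sinh_pos_iff.2 (by linarith)
  have h0 : (0:ℝ) < Real.sinh y * Real.cosh x - Real.cosh y * Real.sinh x := by
    have := Real.sinh_pos_iff.2 (sub_pos.2 hxy)
    rwa [Real.sinh_sub] at this
  have hlt : (Real.cosh (y + r2) * Real.cosh (r2 + r3) - Real.cosh (y + r3)) /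
      (Real.sinh (y + r2) * Real.sinh (r2 + r3)) <
      (Real.cosh (x + r2) * Real.cosh (r2 + r3) - Real.cosh (x + r3)) /
      (Real.sinh (x + r2) * Real.sinh (r2 + r3)) := by
    rw [div_lt_div_iff₀ (mul_pos hay hb) (mul_pos hax hb)]
    have hE : (Real.cosh (x + r2) * Real.cosh (r2 + r3) - Real.cosh (x + r3)) *
        (Real.sinh (y + r2) * Real.sinh (r2 + r3)) -
        (Real.cosh (y + r2) * Real.cosh (r2 + r3) - Real.cosh (y + r3)) *
        (Real.sinh (x + r2) * Real.sinh (r2 + r3))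
        = 2 * Real.sinh r2 * Real.sinh r3 *
          (Real.sinh y * Real.cosh x - Real.cosh y * Real.sinh x) *
          (Real.sinh r2 * Real.cosh r3 + Real.cosh r2 * Real.sinh r3) := by
      simp only [Real.cosh_add, Real.sinh_add]
      linear_combination ((Real.cosh x * Real.sinh y - Real.sinh x * Real.cosh y) *
        (Real.cosh r3 * Real.sinh r3 * (Real.sinh r2 ^ 2 + Real.cosh r2 ^ 2) +
         Real.cosh r2 * Real.sinh r2 * (Real.sinh r3 ^ 2 + Real.cosh r3 ^ 2))) *
        Real.cosh_sq_sub_sinh_sq r2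
    have hshb : (0:ℝ) < Real.sinh r2 * Real.cosh r3 + Real.cosh r2 * Real.sinh r3 := by
      have := mul_pos s2 c3
      have := mul_pos c2 s3
      linarith
    have h2s : (0:ℝ) < 2 * Real.sinh r2 := by linarith
    have hpos := mul_pos (mul_pos (mul_pos h2s s3) h0) hshb
    linarith [hE, hpos]
  exact mul_lt_mul_of_pos_right (Real.strictAntiOn_arccos (key y hy) (key x hx) hlt)
    (Real.cosh_pos r2)
end

section
/- Fix r2, r3 > 0. For r1 > 0, let θ1(r1) = arccos[(cosh(r1 + r2)·cosh(r1 + r3) − cosh(r2 + r3)) / (sinh(r1 + r2)·sinh(r1 + r3))]. Then the function r1 ↦ θ1(r1)·cosh(r1) is strictly decreasing on (0, +∞). -/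
/-!
Write `u = cos θ₁` and `K = 2 sinh r₂ sinh r₃`. Then `1 - u = K / (sinh a sinh b)` with
`a = r₁ + r₂`, `b = r₁ + r₃`, so `u' = K sinh (a + b) / (sinh a sinh b)²`. The derivative of
`θ₁ cosh r₁` is `(θ₁ sin θ₁ sinh r₁ - u' cosh r₁) / sin θ₁`, and the elementary bound
`θ sin θ ≤ 2 (1 - cos θ)` on `[0, π]` reduces its negativity to
`2 sinh r₁ sinh a sinh b < cosh r₁ sinh (a + b)`, whose difference is
`sinh a cosh r₃ + sinh b cosh r₂ > 0`.
-/

open Real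

namespace Real

lemma mul_cos_le_sin {x : ℝ} (h₀ : 0 ≤ x) (hx : x ≤ π / 2) : x * cos x ≤ sin x := by
  rcases hx.lt_or_eq with hx | rfl
  · have hcos : 0 < cos x := cos_pos_of_mem_Ioo ⟨by linarith [pi_pos], hx⟩
    rw [← le_div_iff₀ hcos, ← tan_eq_sin_div_cos]
    exact le_tan h₀ hx
  · simp

lemma mul_sin_le_two_mul_one_sub_cos {θ : ℝ} (h₀ : 0 ≤ θ) (hθ : θ ≤ π) :
    θ * sin θ ≤ 2 * (1 - cos θ) := by
  set t := θ / 2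
  have hθt : θ = 2 * t := by ring
  have hsin : 0 ≤ sin t := sin_nonneg_of_nonneg_of_le_pi (by positivity) (by linarith)
  have hle : t * cos t ≤ sin t := mul_cos_le_sin (by positivity) (by linarith)
  rw [hθt, sin_two_mul, cos_two_mul, cos_sq']
  nlinarith [mul_le_mul_of_nonneg_left hle hsin]

lemma arccos_mul_sqrt_one_sub_sq_le {u : ℝ} (h₁ : -1 ≤ u) (h₂ : u ≤ 1) :
    arccos u * √(1 - u ^ 2) ≤ 2 * (1 - u) := by
  simpa only [sin_arccos, cos_arccos h₁ h₂] using
    mul_sin_le_two_mul_one_sub_cos (arccos_nonneg u) (arccos_le_pi u)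

lemma two_mul_sinh_mul_sinh_mul_sinh_lt {a b : ℝ} (ha : 0 < a) (hb : 0 < b) (x : ℝ) :
    2 * sinh x * (sinh a * sinh b) < cosh x * sinh (a + b) := by
  have hdiff : cosh x * sinh (a + b) - 2 * sinh x * (sinh a * sinh b) =
      sinh a * cosh (b - x) + sinh b * cosh (a - x) := by
    rw [sinh_add, cosh_sub, cosh_sub]; ring
  have : 0 < sinh a * cosh (b - x) + sinh b * cosh (a - x) := by
    have := sinh_pos_iff.2 ha; have := sinh_pos_iff.2 hb; positivity
  linarith

end Real

lemma sinh_add_mul_sinh_add_sub (r₁ r₂ r₃ : ℝ) :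
    sinh (r₁ + r₂) * sinh (r₁ + r₃) - (cosh (r₁ + r₂) * cosh (r₁ + r₃) - cosh (r₂ + r₃)) =
      2 * sinh r₂ * sinh r₃ := by
  have hcosh : cosh (r₂ - r₃) = cosh ((r₁ + r₂) - (r₁ + r₃)) := by ring_nf
  rw [cosh_sub, cosh_sub] at hcosh
  rw [cosh_add r₂ r₃]
  linarith

noncomputable def hypCosAngle (r₁ r₂ r₃ : ℝ) : ℝ :=
  (cosh (r₁ + r₂) * cosh (r₁ + r₃) - cosh (r₂ + r₃)) / (sinh (r₁ + r₂) * sinh (r₁ + r₃))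

section hypCosAngle

variable {r₁ r₂ r₃ : ℝ}

lemma one_sub_hypCosAngle (h : sinh (r₁ + r₂) * sinh (r₁ + r₃) ≠ 0) :
    1 - hypCosAngle r₁ r₂ r₃ = 2 * sinh r₂ * sinh r₃ / (sinh (r₁ + r₂) * sinh (r₁ + r₃)) := by
  rw [hypCosAngle, one_sub_div h, sinh_add_mul_sinh_add_sub]

lemma one_add_hypCosAngle (h : sinh (r₁ + r₂) * sinh (r₁ + r₃) ≠ 0) :
    1 + hypCosAngle r₁ r₂ r₃ =
      (cosh ((r₁ + r₂) + (r₁ + r₃)) - cosh (r₂ + r₃)) / (sinh (r₁ + r₂) * sinh (r₁ + r₃)) := by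
  rw [hypCosAngle, one_add_div h, cosh_add (r₁ + r₂)]
  ring_nf

lemma hasDerivAt_hypCosAngle (h : sinh (r₁ + r₂) * sinh (r₁ + r₃) ≠ 0) :
    HasDerivAt (fun r ↦ hypCosAngle r r₂ r₃)
      (2 * sinh r₂ * sinh r₃ * sinh ((r₁ + r₂) + (r₁ + r₃)) /
        (sinh (r₁ + r₂) * sinh (r₁ + r₃)) ^ 2) r₁ := by
  have hnum : HasDerivAt (fun r ↦ cosh (r + r₂) * cosh (r + r₃) - cosh (r₂ + r₃))
      (sinh ((r₁ + r₂) + (r₁ + r₃))) r₁ := by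
    refine ((((hasDerivAt_id' r₁).add_const r₂).cosh.mul
      ((hasDerivAt_id' r₁).add_const r₃).cosh).sub_const (cosh (r₂ + r₃))).congr_deriv ?_
    rw [sinh_add (r₁ + r₂)]; ring
  have hden : HasDerivAt (fun r ↦ sinh (r + r₂) * sinh (r + r₃))
      (sinh ((r₁ + r₂) + (r₁ + r₃))) r₁ := by
    refine (((hasDerivAt_id' r₁).add_const r₂).sinh.mul
      ((hasDerivAt_id' r₁).add_const r₃).sinh).congr_deriv ?_
    rw [sinh_add (r₁ + r₂)]; ring
  refine (hnum.div hden h).congr_deriv ?_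
  rw [← sinh_add_mul_sinh_add_sub r₁ r₂ r₃]
  ring

lemma sinh_add_mul_sinh_add_pos (h₁ : 0 < r₁) (h₂ : 0 < r₂) (h₃ : 0 < r₃) :
    0 < sinh (r₁ + r₂) * sinh (r₁ + r₃) :=
  mul_pos (sinh_pos_iff.2 (by positivity)) (sinh_pos_iff.2 (by positivity))

lemma hypCosAngle_mem_Ioo (h₁ : 0 < r₁) (h₂ : 0 < r₂) (h₃ : 0 < r₃) :
    hypCosAngle r₁ r₂ r₃ ∈ Set.Ioo (-1) 1 := by
  have hB := sinh_add_mul_sinh_add_pos h₁ h₂ h₃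
  have hcosh : cosh (r₂ + r₃) < cosh ((r₁ + r₂) + (r₁ + r₃)) := by
    rw [cosh_lt_cosh, abs_of_pos (by positivity), abs_of_pos (by positivity)]
    linarith
  have hsub := one_sub_hypCosAngle hB.ne'
  have hadd := one_add_hypCosAngle hB.ne'
  have : 0 < 2 * sinh r₂ * sinh r₃ / (sinh (r₁ + r₂) * sinh (r₁ + r₃)) := by
    have := sinh_pos_iff.2 h₂; have := sinh_pos_iff.2 h₃; positivity
  have : 0 < (cosh ((r₁ + r₂) + (r₁ + r₃)) - cosh (r₂ + r₃)) /
      (sinh (r₁ + r₂) * sinh (r₁ + r₃)) := div_pos (by linarith) hB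
  constructor <;> linarith

lemma exists_hasDerivAt_arccos_hypCosAngle_mul_cosh_neg
    (h₁ : 0 < r₁) (h₂ : 0 < r₂) (h₃ : 0 < r₃) :
    ∃ d < 0, HasDerivAt (fun r ↦ arccos (hypCosAngle r r₂ r₃) * cosh r) d r₁ := by
  set u := hypCosAngle r₁ r₂ r₃
  set B := sinh (r₁ + r₂) * sinh (r₁ + r₃)
  set K := 2 * sinh r₂ * sinh r₃
  set S := sinh ((r₁ + r₂) + (r₁ + r₃))
  have hB : 0 < B := sinh_add_mul_sinh_add_pos h₁ h₂ h₃
  have hK : 0 < K := by have := sinh_pos_iff.2 h₂; have := sinh_pos_iff.2 h₃; positivity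
  have hu := hypCosAngle_mem_Ioo h₁ h₂ h₃
  have hs : 0 < √(1 - u ^ 2) := sqrt_pos.2 (by nlinarith [hu.1, hu.2])
  have hθ : HasDerivAt (arccos ∘ fun r ↦ hypCosAngle r r₂ r₃)
      (-(1 / √(1 - u ^ 2)) * (K * S / B ^ 2)) r₁ :=
    (hasDerivAt_arccos hu.1.ne' hu.2.ne).comp r₁ (hasDerivAt_hypCosAngle hB.ne')
  refine ⟨_, ?_, hθ.mul (hasDerivAt_cosh r₁)⟩
  have hsinh : 0 ≤ sinh r₁ := sinh_nonneg_iff.2 h₁.le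
  have hkey : arccos u * √(1 - u ^ 2) * sinh r₁ < K * S / B ^ 2 * cosh r₁ :=
    calc arccos u * √(1 - u ^ 2) * sinh r₁
        ≤ 2 * (1 - u) * sinh r₁ :=
          mul_le_mul_of_nonneg_right (arccos_mul_sqrt_one_sub_sq_le hu.1.le hu.2.le) hsinh
      _ = K * (2 * sinh r₁ * B) / B ^ 2 := by
          rw [one_sub_hypCosAngle hB.ne']
          change 2 * (K / B) * sinh r₁ = _
          field_simp
      _ < K * (cosh r₁ * S) / B ^ 2 := by
          gcongr K * ?_ / _
          exact two_mul_sinh_mul_sinh_mul_sinh_lt (by positivity) (by positivity) r₁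
      _ = K * S / B ^ 2 * cosh r₁ := by ring
  have hlt : arccos u * sinh r₁ < K * S / B ^ 2 * cosh r₁ / √(1 - u ^ 2) := by
    rw [lt_div_iff₀ hs]; linarith
  calc _ = arccos u * sinh r₁ - K * S / B ^ 2 * cosh r₁ / √(1 - u ^ 2) := by
        simp only [Function.comp_apply]; ring
    _ < 0 := sub_neg.2 hlt

end hypCosAngle

theorem stmt_14 (r2 r3 : ℝ) (h2 : 0 < r2) (h3 : 0 < r3) :
    StrictAntiOn
      (fun r1 : ℝ =>
        Real.arccos ((Real.cosh (r1 + r2) * Real.cosh (r1 + r3) - Real.cosh (r2 + r3)) /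
          (Real.sinh (r1 + r2) * Real.sinh (r1 + r3))) * Real.cosh r1)
      (Set.Ioi 0) := by
  change StrictAntiOn (fun r ↦ arccos (hypCosAngle r r2 r3) * cosh r) (Set.Ioi 0)
  choose! d hd_neg hd using fun r1 (h1 : r1 ∈ Set.Ioi (0 : ℝ)) ↦
    exists_hasDerivAt_arccos_hypCosAngle_mul_cosh_neg h1 h2 h3
  refine strictAntiOn_of_deriv_neg (convex_Ioi 0)
    (fun r hr ↦ (hd r hr).continuousAt.continuousWithinAt) fun r hr ↦ ?_
  rw [interior_Ioi] at hr
  rw [(hd r hr).deriv]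
  exact hd_neg r hr
end

section
/- Let n ≥ 1 and let G : ℝⁿ → ℝ be a C²-smooth strictly convex function. Then its gradient map ∇G : ℝⁿ → ℝⁿ is injective and is an open map; in particular ∇G is a homeomorphism onto its open image ∇G(ℝⁿ). -/
/-!
Strict convexity gives the strict first-order inequality `f x + ⟪∇f x, y - x⟫ < f y` for `x ≠ y`;
adding it to the same inequality with `x` and `y` swapped shows that `∇f` is injective.
For openness, the Bregman divergence `f z - f x - ⟪∇f x, z - x⟫` is positive on the compact sphere
`‖z - x‖ = r`, hence bounded below there by some `m > 0`. If `‖p - ∇f x‖ < m / r`, then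
`z ↦ f z - ⟪p, z⟫` is smaller at `x` than anywhere on that sphere, so it has a local minimum `z`
inside the ball, and there `∇f z = p`.
-/

open Gradient InnerProductSpace Metric Set Topology

theorem StrictConvexOn.comp_lineMap {E : Type*} [AddCommGroup E] [Module ℝ E] {f : E → ℝ}
    (hf : StrictConvexOn ℝ univ f) {x y : E} (hxy : x ≠ y) :
    StrictConvexOn ℝ univ (f ∘ AffineMap.lineMap (k := ℝ) x y) := by
  refine ⟨convex_univ, fun s _ t _ hst a b ha hb hab => ?_⟩
  have hne : AffineMap.lineMap x y s ≠ AffineMap.lineMap (k := ℝ) x y t :=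
    (AffineMap.lineMap_injective ℝ hxy).ne hst
  change f (AffineMap.lineMap x y (a • s + b • t)) < a • f _ + b • f _
  rw [Convex.combo_affine_apply hab]
  exact hf.2 trivial trivial hne ha hb hab

theorem ContDiff.continuous_gradient {E : Type*} [NormedAddCommGroup E] [InnerProductSpace ℝ E]
    [CompleteSpace E] {f : E → ℝ} {n : WithTop ℕ∞} (hf : ContDiff ℝ n f) (hn : n ≠ 0) :
    Continuous (∇ f) :=
  (toDual ℝ E).symm.continuous.comp (hf.continuous_fderiv hn)

section

variable {E : Type*} [NormedAddCommGroup E] [InnerProductSpace ℝ E] [CompleteSpace E] {f : E → ℝ}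

theorem gradient_eq_of_isLocalMin_sub_inner {g p z : E} (hg : HasGradientAt f g z)
    (hmin : IsLocalMin (fun w => f w - ⟪p, w⟫_ℝ) z) : g = p := by
  have hzero := hmin.hasFDerivAt_eq_zero (hg.hasFDerivAt.sub (innerSL ℝ p).hasFDerivAt)
  have : ⟪g, g - p⟫_ℝ - ⟪p, g - p⟫_ℝ = 0 := by
    simpa using congrArg (fun L : E →L[ℝ] ℝ => L (g - p)) hzero
  rw [← inner_sub_left, real_inner_self_eq_norm_sq] at this
  simpa [sub_eq_zero] using this

namespace StrictConvexOn

theorem add_inner_lt (hf : StrictConvexOn ℝ univ f) {x y g : E} (hg : HasGradientAt f g x)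
    (hxy : x ≠ y) : f x + ⟪g, y - x⟫_ℝ < f y := by
  have hderiv : HasDerivAt (f ∘ AffineMap.lineMap (k := ℝ) x y) ⟪g, y - x⟫_ℝ 0 := by
    have hg' : HasFDerivAt f (toDual ℝ E g) (AffineMap.lineMap x y (0 : ℝ)) := by
      simpa using hg.hasFDerivAt
    simpa using hg'.comp_hasDerivAt 0 AffineMap.hasDerivAt_lineMap
  have := (hf.comp_lineMap hxy).lt_slope_of_hasDerivAt trivial trivial zero_lt_one hderiv
  simp only [slope_def_field, Function.comp_apply, AffineMap.lineMap_apply_one,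
    AffineMap.lineMap_apply_zero, sub_zero, div_one] at this
  linarith

theorem injective_gradient (hf : StrictConvexOn ℝ univ f) (hd : Differentiable ℝ f) :
    Function.Injective (∇ f) := by
  intro x y hxy
  by_contra hne
  have h₁ := hf.add_inner_lt (hd x).hasGradientAt hne
  have h₂ := hf.add_inner_lt (hd y).hasGradientAt (Ne.symm hne)
  rw [hxy, ← neg_sub, inner_neg_right] at h₁
  linarith

theorem exists_ball_subset_image_gradient [ProperSpace E] (hf : StrictConvexOn ℝ univ f)
    (hd : Differentiable ℝ f) (x : E) {r : ℝ} (hr : 0 < r) :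
    ∃ δ > 0, ball (∇ f x) δ ⊆ ∇ f '' ball x r := by
  have hc := hd.continuous
  set D : E → ℝ := fun z => f z - f x - ⟪∇ f x, z - x⟫_ℝ
  have hD : ∀ z ∈ sphere x r, 0 < D z := fun z hz => by
    have := hf.add_inner_lt (hd x).hasGradientAt (ne_of_mem_sphere hz hr.ne').symm
    simp only [D]
    linarith
  obtain ⟨m, hm, hmD⟩ := (isCompact_sphere x r).exists_forall_le'
    (by fun_prop : Continuous D).continuousOn hD
  refine ⟨m / r, div_pos hm hr, fun p hp => ?_⟩
  have hbdry : ∀ z ∈ sphere x r, f x - ⟪p, x⟫_ℝ < f z - ⟪p, z⟫_ℝ := fun z hz => by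
    have hinner : ⟪p - ∇ f x, z - x⟫_ℝ < m := calc
      _ ≤ ‖p - ∇ f x‖ * ‖z - x‖ := real_inner_le_norm _ _
      _ < m / r * r := by
        rw [mem_sphere_iff_norm.mp hz, ← dist_eq_norm]
        exact mul_lt_mul_of_pos_right hp hr
      _ = m := div_mul_cancel₀ m hr.ne'
    have := hmD z hz
    simp only [D, inner_sub_left, inner_sub_right] at this hinner
    linarith
  obtain ⟨z, hz, hmin⟩ := exists_isLocalMin_mem_ball (f := fun w => f w - ⟪p, w⟫_ℝ)
    (by fun_prop) (mem_closedBall_self hr.le) hbdry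
  exact ⟨z, hz, gradient_eq_of_isLocalMin_sub_inner (hd z).hasGradientAt hmin⟩

theorem isOpenMap_gradient [ProperSpace E] (hf : StrictConvexOn ℝ univ f)
    (hd : Differentiable ℝ f) : IsOpenMap (∇ f) := by
  intro U hU
  rw [Metric.isOpen_iff]
  rintro _ ⟨x, hx, rfl⟩
  obtain ⟨r, hr, hball⟩ := Metric.isOpen_iff.mp hU x hx
  obtain ⟨δ, hδ, hsub⟩ := hf.exists_ball_subset_image_gradient hd x hr
  exact ⟨δ, hδ, hsub.trans (image_mono hball)⟩

end StrictConvexOn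

end

theorem stmt_15_general (n : ℕ) (G : EuclideanSpace ℝ (Fin n) → ℝ)
    (hG : ContDiff ℝ 2 G) (hconv : StrictConvexOn ℝ Set.univ G) :
    Function.Injective (∇ G) ∧ IsOpenMap (∇ G) ∧ IsOpen (Set.range (∇ G)) ∧
    ∃ h : EuclideanSpace ℝ (Fin n) ≃ₜ Set.range (∇ G), ∀ x, (h x : EuclideanSpace ℝ (Fin n)) = ∇ G x := by
  have hd : Differentiable ℝ G := hG.differentiable (by norm_num)
  have hinj := hconv.injective_gradient hd
  have hopen := hconv.isOpenMap_gradient hd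
  have hemb : IsOpenEmbedding (∇ G) :=
    .of_continuous_injective_isOpenMap (hG.continuous_gradient (by norm_num)) hinj hopen
  exact ⟨hinj, hopen, hopen.isOpen_range, hemb.isEmbedding.toHomeomorph, fun _ => rfl⟩

theorem stmt_15 (n : ℕ) (hn : 1 ≤ n) (G : EuclideanSpace ℝ (Fin n) → ℝ)
    (hG : ContDiff ℝ 2 G) (hconv : StrictConvexOn ℝ Set.univ G) :
    Function.Injective (∇ G) ∧ IsOpenMap (∇ G) ∧ IsOpen (Set.range (∇ G)) ∧
    ∃ h : EuclideanSpace ℝ (Fin n) ≃ₜ Set.range (∇ G), ∀ x, (h x : EuclideanSpace ℝ (Fin n)) = ∇ G x :=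
  stmt_15_general n G hG hconv
end

section
/- Let n ≥ 1 and let f : ℝⁿ → ℝ be a C¹-smooth convex function such that ∇f(x₀) = 0 for some x₀ ∈ ℝⁿ, and suppose f is C²-smooth and strictly convex on an open neighborhood of x₀. Then ∇f(x) ≠ 0 for every x ∈ ℝⁿ with x ≠ x₀. -/
/-!
A critical point of a convex function is a global minimiser (restrict to lines), and the
minimisers form a convex set. A second critical point `x` would therefore make the whole segment
`[x₀, x]` minimisers; its points close to `x₀` lie in `U`, where a strictly convex function has
at most one minimiser.
-/

open Set Filter Topology AffineMap Gradient

theorem ConvexOn.le_of_hasFDerivAt_eq_zero {E : Type*} [NormedAddCommGroup E] [NormedSpace ℝ E]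
    {f : E → ℝ} {x : E} (hf : ConvexOn ℝ univ f) (hx : HasFDerivAt f (0 : E →L[ℝ] ℝ) x)
    (y : E) : f x ≤ f y := by
  have hline : HasDerivAt (f ∘ (lineMap x y : ℝ → E)) 0 0 := by
    simpa using hx.comp_hasDerivAt_of_eq (0 : ℝ) hasDerivAt_lineMap (lineMap_apply_zero x y).symm
  have hslope : 0 ≤ slope (f ∘ (lineMap x y : ℝ → E)) 0 1 :=
    (hf.comp_affineMap (lineMap x y)).le_slope_of_hasDerivAt (mem_univ 0) (mem_univ 1)
      one_pos hline
  simpa [slope_def_field] using hslope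

theorem StrictConvexOn.eq_of_isMinOn_of_mem_nhds {E : Type*} [NormedAddCommGroup E]
    [NormedSpace ℝ E] {f : E → ℝ} {U : Set E} {x₀ x : E} (hf : ConvexOn ℝ univ f)
    (hfU : StrictConvexOn ℝ U f) (hU : U ∈ 𝓝 x₀) (hx₀ : IsMinOn f univ x₀)
    (hx : IsMinOn f univ x) : x = x₀ := by
  by_contra hne
  have hseg : ∀ t ∈ Icc (0 : ℝ) 1, IsMinOn f univ (lineMap x₀ x t) := by
    intro t ht
    have hsub := (hf.convex_le (f x₀)).segment_subset (x := x₀) (y := x)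
      ⟨mem_univ _, le_rfl⟩ ⟨mem_univ _, hx (mem_univ x₀)⟩
    rw [segment_eq_image_lineMap] at hsub
    exact fun z _ ↦ ((hsub ⟨t, ht, rfl⟩).2).trans (hx₀ (mem_univ z))
  have hnear : ∀ᶠ t in 𝓝[>] (0 : ℝ), lineMap x₀ x t ∈ U ∧ t ∈ Ioo (0 : ℝ) 1 := by
    refine Eventually.and ?_ (Ioo_mem_nhdsGT one_pos)
    exact ((lineMap_continuous.tendsto' 0 x₀ (lineMap_apply_zero x₀ x)).eventually hU).filter_mono
      nhdsWithin_le_nhds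
  obtain ⟨t, htU, ht⟩ := hnear.exists
  have heq : lineMap x₀ x t = x₀ :=
    hfU.eq_of_isMinOn ((hseg t (Ioo_subset_Icc_self ht)).on_subset (subset_univ U))
      (hx₀.on_subset (subset_univ U)) htU (mem_of_mem_nhds hU)
  rw [lineMap_eq_left_iff] at heq
  exact heq.elim (fun h ↦ hne h.symm) ht.1.ne'

theorem stmt_16_general (n : ℕ) (f : EuclideanSpace ℝ (Fin n) → ℝ)
    (hf : ContDiff ℝ 1 f) (hconv : ConvexOn ℝ Set.univ f)
    (x₀ : EuclideanSpace ℝ (Fin n)) (hx₀ : ∇ f x₀ = 0)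
    (U : Set (EuclideanSpace ℝ (Fin n))) (hUopen : IsOpen U) (hx₀U : x₀ ∈ U)
    (hsconv : StrictConvexOn ℝ U f) :
    ∀ x : EuclideanSpace ℝ (Fin n), x ≠ x₀ → ∇ f x ≠ 0 := by
  have hcrit : ∀ z, ∇ f z = 0 → IsMinOn f univ z := fun z hz ↦ by
    have hgrad := ((hf.differentiable one_ne_zero) z).hasGradientAt
    rw [hz, hasGradientAt_iff_hasFDerivAt, map_zero] at hgrad
    exact isMinOn_univ_iff.mpr (hconv.le_of_hasFDerivAt_eq_zero hgrad)
  intro x hx hgx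
  exact hx (hsconv.eq_of_isMinOn_of_mem_nhds hconv (hUopen.mem_nhds hx₀U) (hcrit x₀ hx₀)
    (hcrit x hgx))

theorem stmt_16 (n : ℕ) (hn : 1 ≤ n) (f : EuclideanSpace ℝ (Fin n) → ℝ)
    (hf : ContDiff ℝ 1 f) (hconv : ConvexOn ℝ Set.univ f)
    (x₀ : EuclideanSpace ℝ (Fin n)) (hx₀ : ∇ f x₀ = 0)
    (U : Set (EuclideanSpace ℝ (Fin n))) (hUopen : IsOpen U) (hx₀U : x₀ ∈ U)
    (hfU : ContDiffOn ℝ 2 f U) (hsconv : StrictConvexOn ℝ U f) :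
    ∀ x : EuclideanSpace ℝ (Fin n), x ≠ x₀ → ∇ f x ≠ 0 :=
  stmt_16_general n f hf hconv x₀ hx₀ U hUopen hx₀U hsconv
end

section
/- Let n ≥ 1 and let f : ℝⁿ → ℝ be a C¹-smooth convex function such that ∇f(x₀) = 0 for some x₀ ∈ ℝⁿ, and suppose f is C²-smooth and strictly convex on an open neighborhood of x₀. Then f(x) → +∞ as ‖x‖ → +∞. -/
open Real Gradient Filter

/-! A convex function whose gradient vanishes at `x₀` attains its minimum there, and strict
convexity near `x₀` makes that minimum strict on a small sphere around `x₀`; by compactness `f`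
exceeds `f x₀` by some `c > 0` on that sphere. Convexity along each ray from `x₀` then propagates
this gap linearly: `f x ≥ f x₀ + (c / r) ‖x - x₀‖` outside the ball, so `f` is coercive. -/

theorem ConvexOn.isMinOn_of_hasFDerivAt_eq_zero {E : Type*} [NormedAddCommGroup E]
    [NormedSpace ℝ E] {f : E → ℝ} (hconv : ConvexOn ℝ Set.univ f) {x₀ : E}
    (hf : HasFDerivAt f (0 : E →L[ℝ] ℝ) x₀) :
    IsMinOn f Set.univ x₀ := by
  intro y _
  set g : ℝ → ℝ := f ∘ (AffineMap.lineMap x₀ y : ℝ →ᵃ[ℝ] E)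
  have hg : ConvexOn ℝ Set.univ g := hconv.comp_affineMap _
  have hg' : HasDerivAt g 0 0 := by
    have hline : HasDerivAt (AffineMap.lineMap x₀ y : ℝ →ᵃ[ℝ] E) (y - x₀) 0 :=
      AffineMap.hasDerivAt_lineMap
    rw [← AffineMap.lineMap_apply_zero (k := ℝ) x₀ y] at hf
    simpa [g] using hf.comp_hasDerivAt (0 : ℝ) hline
  have := hg.le_slope_of_hasDerivAt (Set.mem_univ 0) (Set.mem_univ 1) one_pos hg'
  simpa [g, slope_def_field] using this

theorem StrictConvexOn.lt_of_isMinOn {𝕜 E β : Type*} [Field 𝕜] [LinearOrder 𝕜]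
    [IsStrictOrderedRing 𝕜] [AddCommMonoid E] [SMul 𝕜 E] [AddCommMonoid β] [PartialOrder β]
    [IsOrderedAddMonoid β] [Module 𝕜 β] [PosSMulMono 𝕜 β]
    {s : Set E} {f : E → β} {x y : E} (hf : StrictConvexOn 𝕜 s f) (hx : IsMinOn f s x)
    (hxs : x ∈ s) (hys : y ∈ s) (hne : y ≠ x) : f x < f y := by
  refine lt_of_le_of_ne (hx hys) fun hxy => hne ?_
  exact hf.eq_of_isMinOn (fun z hz => hxy ▸ hx hz) hx hys hxs

theorem ConvexOn.add_div_mul_norm_sub_le_of_forall_mem_sphere {E : Type*}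
    [NormedAddCommGroup E] [NormedSpace ℝ E] {f : E → ℝ} (hconv : ConvexOn ℝ Set.univ f) {x₀ : E} {r c : ℝ} (hr : 0 < r)
    (hsphere : ∀ y ∈ Metric.sphere x₀ r, f x₀ + c ≤ f y) :
    ∀ x, r ≤ ‖x - x₀‖ → f x₀ + c / r * ‖x - x₀‖ ≤ f x := by
  intro x hx
  set d := ‖x - x₀‖
  have hd : 0 < d := hr.trans_le hx
  set t := r / d
  have ht : 0 < t := by positivity
  have ht1 : t ≤ 1 := (div_le_one hd).2 hx
  -- the segment from `x₀` to `x` crosses the sphere at parameter `t`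
  have hy : x₀ + t • (x - x₀) ∈ Metric.sphere x₀ r := by
    rw [mem_sphere_iff_norm, add_sub_cancel_left, norm_smul, Real.norm_of_nonneg ht.le]
    exact div_mul_cancel₀ r hd.ne'
  have hcomb : f (x₀ + t • (x - x₀)) ≤ (1 - t) * f x₀ + t * f x := by
    have hseg : (1 - t) • x₀ + t • x = x₀ + t • (x - x₀) := by module
    simpa [hseg] using
      hconv.2 (Set.mem_univ x₀) (Set.mem_univ x) (sub_nonneg.2 ht1) ht.le (sub_add_cancel 1 t)
  have hct : c ≤ t * (f x - f x₀) := by linarith [hsphere _ hy]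
  calc f x₀ + c / r * d = f x₀ + c / t := by simp only [t]; field_simp
    _ ≤ f x := by linarith [(div_le_iff₀' ht).2 hct]

theorem tendsto_comap_norm_atTop_of_linear_growth {E : Type*} [SeminormedAddCommGroup E]
    {f : E → ℝ} {x₀ : E} {r a k : ℝ} (hk : 0 < k)
    (h : ∀ x, r ≤ ‖x - x₀‖ → a + k * ‖x - x₀‖ ≤ f x) :
    Tendsto f (comap (fun x : E => ‖x‖) atTop) atTop := by
  have hnorm : Tendsto (fun x : E => ‖x‖) (comap (fun x : E => ‖x‖) atTop) atTop := tendsto_comap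
  refine tendsto_atTop_mono' _ ?_ <| tendsto_atTop_add_const_left _ a <|
    (tendsto_atTop_add_const_right _ (-‖x₀‖) hnorm).const_mul_atTop hk
  filter_upwards [hnorm.eventually_ge_atTop (r + ‖x₀‖)] with x hx
  have hx' : ‖x‖ - ‖x₀‖ ≤ ‖x - x₀‖ := norm_sub_norm_le x x₀
  have := h x (by linarith)
  nlinarith

theorem stmt_17_general (n : ℕ) (f : EuclideanSpace ℝ (Fin n) → ℝ)
    (hf : ContDiff ℝ 1 f) (hconv : ConvexOn ℝ Set.univ f)
    (x₀ : EuclideanSpace ℝ (Fin n)) (hx₀ : ∇ f x₀ = 0)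
    (U : Set (EuclideanSpace ℝ (Fin n))) (hUopen : IsOpen U) (hx₀U : x₀ ∈ U)
    (hsconv : StrictConvexOn ℝ U f) :
    Tendsto f (Filter.comap (fun x => ‖x‖) Filter.atTop) Filter.atTop := by
  have hmin : IsMinOn f Set.univ x₀ := by
    refine hconv.isMinOn_of_hasFDerivAt_eq_zero ?_
    have := ((hf.differentiable one_ne_zero) x₀).hasGradientAt.hasFDerivAt
    rwa [hx₀, map_zero] at this
  obtain ⟨r, hr, hrU⟩ := Metric.nhds_basis_closedBall.mem_iff.1 (hUopen.mem_nhds hx₀U)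
  have hsphere : ∀ y ∈ Metric.sphere x₀ r, f x₀ < f y := fun y hy =>
    hsconv.lt_of_isMinOn (hmin.on_subset (Set.subset_univ U)) hx₀U
      (hrU (Metric.sphere_subset_closedBall hy)) (Metric.ne_of_mem_sphere hy hr.ne')
  obtain ⟨m, hm, hmS⟩ :=
    (isCompact_sphere x₀ r).exists_forall_le' hf.continuous.continuousOn hsphere
  exact tendsto_comap_norm_atTop_of_linear_growth (div_pos (sub_pos.2 hm) hr) <|
    hconv.add_div_mul_norm_sub_le_of_forall_mem_sphere hr fun y hy => by linarith [hmS y hy]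

theorem stmt_17 (n : ℕ) (hn : 1 ≤ n) (f : EuclideanSpace ℝ (Fin n) → ℝ)
    (hf : ContDiff ℝ 1 f) (hconv : ConvexOn ℝ Set.univ f)
    (x₀ : EuclideanSpace ℝ (Fin n)) (hx₀ : ∇ f x₀ = 0)
    (U : Set (EuclideanSpace ℝ (Fin n))) (hUopen : IsOpen U) (hx₀U : x₀ ∈ U)
    (hfU : ContDiffOn ℝ 2 f U) (hsconv : StrictConvexOn ℝ U f) :
    Tendsto f (Filter.comap (fun x => ‖x‖) Filter.atTop) Filter.atTop :=
  stmt_17_general n f hf hconv x₀ hx₀ U hUopen hx₀U hsconv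
end
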